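/- Let A ∈ L_{1|2}(H) with ‖A‖_{1|2} := max(‖A‖₂, ‖A_even‖₁) < 1. Then the series 1 + Σ_{n≥1} Cₙ(A) converges absolutely, where Cₙ(A) := (1/n!) Σ_{ξ∈Sₙ} sign(ξ) Π_{η∈Cycle(ξ)} tr(A^{|η|}) with the convention tr(A) := Tr(A_even); moreover |Cₙ(A)| ≤ ‖A‖_{1|2}ⁿ. -/

import Mathlib

open scoped InnerProductSpace ComplexConjugate

noncomputable section

/-- The absolute value `|A| = √(A*A)` of a bounded operator on a complex Hilbert space. -/
noncomputable def absCLM {H : Type} [NormedAddCommGroup H] [InnerProductSpace ℂ H]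
    [CompleteSpace H] (A : H →L[ℂ] H) : H →L[ℂ] H :=
  CFC.sqrt (ContinuousLinearMap.adjoint A * A)

/-- The trace of an operator computed along a Hilbert basis. -/
noncomputable def traceAlong {H : Type} [NormedAddCommGroup H] [InnerProductSpace ℂ H]
    [CompleteSpace H] {ι : Type} (b : HilbertBasis ι ℂ H) (A : H →L[ℂ] H) : ℂ :=
  ∑' i, ⟪b i, A (b i)⟫_ℂ

/-- `A` is trace class: `Tr |A| < ∞` along the Hilbert basis `b`. -/
def IsTraceClassAlong {H : Type} [NormedAddCommGroup H] [InnerProductSpace ℂ H]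
    [CompleteSpace H] {ι : Type} (b : HilbertBasis ι ℂ H) (A : H →L[ℂ] H) : Prop :=
  Summable fun i => (⟪b i, absCLM A (b i)⟫_ℂ).re

/-- The trace norm `‖A‖₁ = Tr |A|` along the Hilbert basis `b`. -/
noncomputable def traceNormAlong {H : Type} [NormedAddCommGroup H] [InnerProductSpace ℂ H]
    [CompleteSpace H] {ι : Type} (b : HilbertBasis ι ℂ H) (A : H →L[ℂ] H) : ℝ :=
  ∑' i, (⟪b i, absCLM A (b i)⟫_ℂ).re

/-- `A` is a Hilbert–Schmidt operator (along the Hilbert basis `b`). -/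
def IsHSAlong {H : Type} [NormedAddCommGroup H] [InnerProductSpace ℂ H]
    [CompleteSpace H] {ι : Type} (b : HilbertBasis ι ℂ H) (A : H →L[ℂ] H) : Prop :=
  Summable fun i => ‖A (b i)‖ ^ 2

/-- The Hilbert–Schmidt norm `‖A‖₂` along the Hilbert basis `b`. -/
noncomputable def hsNormAlong {H : Type} [NormedAddCommGroup H] [InnerProductSpace ℂ H]
    [CompleteSpace H] {ι : Type} (b : HilbertBasis ι ℂ H) (A : H →L[ℂ] H) : ℝ :=
  Real.sqrt (∑' i, ‖A (b i)‖ ^ 2)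

/-- `Cₙ(A) = (1/n!) Σ_{ξ∈Sₙ} sign ξ · Π_{η ∈ Cycle(ξ)} tr(A^{|η|})`, where `trA` is used
for the trace of `A` itself (cycles of length one) and traces of higher powers are
computed along the Hilbert basis `b`. -/
noncomputable def cycleSum {H : Type} [NormedAddCommGroup H] [InnerProductSpace ℂ H]
    [CompleteSpace H] {ι : Type} (b : HilbertBasis ι ℂ H) (trA : ℂ) (A : H →L[ℂ] H)
    (n : ℕ) : ℂ :=
  ((Nat.factorial n : ℂ))⁻¹ * ∑ ξ : Equiv.Perm (Fin n),
    ((Equiv.Perm.sign ξ : ℤ) : ℂ) * trA ^ (n - ξ.support.card) *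
      ∏ η ∈ ξ.cycleFactorsFinset, traceAlong b (A ^ η.support.card)

/-- The extended Fredholm determinant `Det(1+A)` for `A ∈ L_{1|2}(H)`, with respect to the
splitting given by the projections `P₁, P₂`: `Det(1+A) = 1 + Σ_{n≥1} Cₙ(A)`, where in `Cₙ(A)`
the trace of `A` is taken to be `Tr(A_even)`. -/
noncomputable def fredholmDetExt {H : Type} [NormedAddCommGroup H] [InnerProductSpace ℂ H]
    [CompleteSpace H] {ι : Type} (b : HilbertBasis ι ℂ H) (P₁ P₂ : H →L[ℂ] H)
    (A : H →L[ℂ] H) : ℂ :=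
  1 + ∑' n : ℕ, cycleSum b (traceAlong b (P₁ * A * P₁ + P₂ * A * P₂)) A (n + 1)

/-- The classical Fredholm determinant `Det(1+A)` of a trace class operator `A`. -/
noncomputable def fredholmDetCl {H : Type} [NormedAddCommGroup H] [InnerProductSpace ℂ H]
    [CompleteSpace H] {ι : Type} (b : HilbertBasis ι ℂ H) (A : H →L[ℂ] H) : ℂ :=
  1 + ∑' n : ℕ, cycleSum b (traceAlong b A) A (n + 1)

end

/-!
Every summand of `Cₙ(A)` is `± (tr A)^(number of fixed points)` times a product of traces
`Tr(A^k)`, `k ≥ 2`, one for each nontrivial cycle. The cycle lengths add up to `n` and there are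
`n!` permutations, so `|Cₙ(A)| ≤ Mⁿ` as soon as `|tr A| ≤ M` and `|Tr(A^k)| ≤ M^k` for `k ≥ 2`.

`|Tr(A^k)| ≤ ‖A‖₂^k`: write `⟪eᵢ, A^k eᵢ⟫ = ⟪A* eᵢ, A^(k-2) A eᵢ⟫` and use Cauchy–Schwarz,
`‖A‖ ≤ ‖A‖₂` and `‖A*‖₂ ≤ ‖A‖₂`.

`|Tr B| ≤ ‖B‖₁`: with `a = |B|` and `ε > 0`, factor `B = X q`, where `q = √(a + ε)` and
`X = B q⁻¹`, so that `X* X = a² / (a + ε) ≤ a`. For a finite set `s` of basis vectors,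
Cauchy–Schwarz gives
`(Σ_{i∈s} |⟪eᵢ, B eᵢ⟫|)² ≤ Σ ‖X* eᵢ‖² · Σ_{i∈s} ‖q eᵢ‖² ≤ Tr a · (Tr a + ε |s|)`,
and we let `ε → 0`.
-/

open ContinuousLinearMap

theorem summable_and_tsum_mul_le_sqrt_mul_sqrt {ι : Type*} {f g : ι → ℝ}
    (hf : ∀ i, 0 ≤ f i) (hg : ∀ i, 0 ≤ g i)
    (hf₂ : Summable fun i => f i ^ 2) (hg₂ : Summable fun i => g i ^ 2) :
    Summable (fun i => f i * g i) ∧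
      ∑' i, f i * g i ≤ √(∑' i, f i ^ 2) * √(∑' i, g i ^ 2) := by
  simp_rw [← Real.rpow_two] at hf₂ hg₂ ⊢
  simpa only [Real.sqrt_eq_rpow, one_div] using
    Real.summable_and_inner_le_Lp_mul_Lq_tsum_of_nonneg .two_two hf hg hf₂ hg₂

theorem HilbertBasis.hasSum_norm_inner_sq {ι 𝕜 E : Type*} [RCLike 𝕜] [NormedAddCommGroup E]
    [InnerProductSpace 𝕜 E] (b : HilbertBasis ι 𝕜 E) (x : E) :
    HasSum (fun i => ‖⟪b i, x⟫_𝕜‖ ^ 2) (‖x‖ ^ 2) := by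
  have h := lp.hasSum_norm (p := 2) (by norm_num) (b.repr x)
  simpa [b.repr_apply_apply, Real.rpow_two] using h

theorem ContinuousLinearMap.norm_pow_le_pow_norm {𝕜 E : Type*} [NontriviallyNormedField 𝕜]
    [SeminormedAddCommGroup E] [NormedSpace 𝕜 E] (A : E →L[𝕜] E) (m : ℕ) :
    ‖A ^ m‖ ≤ ‖A‖ ^ m := by
  rcases m with _ | m
  · simpa using opNorm_le_bound (1 : E →L[𝕜] E) zero_le_one fun x => by simp
  · exact norm_pow_le' A m.succ_pos

theorem ContinuousLinearMap.re_inner_apply_le_of_le {𝕜 E : Type*} [RCLike 𝕜]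
    [NormedAddCommGroup E] [InnerProductSpace 𝕜 E] {S T : E →L[𝕜] E} (h : S ≤ T) (x : E) :
    RCLike.re ⟪x, S x⟫_𝕜 ≤ RCLike.re ⟪x, T x⟫_𝕜 := by
  have := ((le_def S T).1 h).re_inner_nonneg_right x
  rw [sub_apply, inner_sub_right, map_sub] at this
  exact sub_nonneg.1 this

theorem Equiv.Perm.sum_card_support_cycleFactorsFinset {α : Type*} [Fintype α] [DecidableEq α]
    (σ : Equiv.Perm α) : ∑ η ∈ σ.cycleFactorsFinset, η.support.card = σ.support.card := by
  rw [← σ.sum_cycleType, σ.cycleType_def, Finset.sum]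
  rfl

-- `|t|` rather than `t` makes the reciprocal continuous on all of `ℝ`; the two agree on the
-- spectrum of an operator `a ≥ 0`, where `cfc (regSqrt ε) a = √(a + ε)`.
noncomputable def regSqrt (ε t : ℝ) : ℝ := √(|t| + ε)

theorem continuous_regSqrt (ε : ℝ) : Continuous (regSqrt ε) := by
  unfold regSqrt; fun_prop

theorem regSqrt_pos {ε : ℝ} (hε : 0 < ε) (t : ℝ) : 0 < regSqrt ε t :=
  Real.sqrt_pos.2 (by positivity)

theorem continuous_inv_regSqrt {ε : ℝ} (hε : 0 < ε) : Continuous fun t => (regSqrt ε t)⁻¹ :=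
  (continuous_regSqrt ε).inv₀ fun t => (regSqrt_pos hε t).ne'

theorem regSqrt_mul_self {ε t : ℝ} (hε : 0 ≤ ε) (ht : 0 ≤ t) :
    regSqrt ε t * regSqrt ε t = t + ε := by
  rw [regSqrt, Real.mul_self_sqrt (by positivity), abs_of_nonneg ht]

variable {H : Type} [NormedAddCommGroup H] [InnerProductSpace ℂ H] [CompleteSpace H]
  {ι : Type} (b : HilbertBasis ι ℂ H)

theorem sum_norm_adjoint_apply_sq_le {X : H →L[ℂ] H} (hX : IsHSAlong b X) (s : Finset ι) :
    ∑ i ∈ s, ‖adjoint X (b i)‖ ^ 2 ≤ ∑' j, ‖X (b j)‖ ^ 2 := by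
  have hrow : ∀ i, HasSum (fun j => ‖⟪b i, X (b j)⟫_ℂ‖ ^ 2) (‖adjoint X (b i)‖ ^ 2) :=
    fun i => (b.hasSum_norm_inner_sq (adjoint X (b i))).congr_fun fun j => by
      rw [adjoint_inner_right, norm_inner_symm]
  have hbessel : ∀ j, ∑ i ∈ s, ‖⟪b i, X (b j)⟫_ℂ‖ ^ 2 ≤ ‖X (b j)‖ ^ 2 := fun j =>
    b.orthonormal.sum_inner_products_le (X (b j))
  calc ∑ i ∈ s, ‖adjoint X (b i)‖ ^ 2 = ∑' j, ∑ i ∈ s, ‖⟪b i, X (b j)⟫_ℂ‖ ^ 2 := by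
        rw [Summable.tsum_finsetSum fun i _ => (hrow i).summable]
        exact Finset.sum_congr rfl fun i _ => (hrow i).tsum_eq.symm
    _ ≤ ∑' j, ‖X (b j)‖ ^ 2 :=
        (hX.of_nonneg_of_le (fun j => Finset.sum_nonneg fun i _ => sq_nonneg _)
          hbessel).tsum_le_tsum hbessel hX

theorem hsNormAlong_nonneg (A : H →L[ℂ] H) : 0 ≤ hsNormAlong b A := Real.sqrt_nonneg _

theorem IsHSAlong.adjoint {X : H →L[ℂ] H} (hX : IsHSAlong b X) : IsHSAlong b (adjoint X) :=
  summable_of_sum_le (fun _ => sq_nonneg _) (sum_norm_adjoint_apply_sq_le b hX)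

theorem hsNormAlong_adjoint_le {X : H →L[ℂ] H} (hX : IsHSAlong b X) :
    hsNormAlong b (adjoint X) ≤ hsNormAlong b X :=
  Real.sqrt_le_sqrt ((hX.adjoint b).tsum_le_of_sum_le (sum_norm_adjoint_apply_sq_le b hX))

theorem opNorm_le_hsNormAlong {A : H →L[ℂ] H} (hA : IsHSAlong b A) :
    ‖A‖ ≤ hsNormAlong b A := by
  refine opNorm_le_bound _ (hsNormAlong_nonneg b A) fun x => ?_
  have hx := b.hasSum_norm_inner_sq x
  have hCS := summable_and_tsum_mul_le_sqrt_mul_sqrt (fun i => norm_nonneg ⟪b i, x⟫_ℂ)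
    (fun i => norm_nonneg (A (b i))) hx.summable hA
  have hAx : HasSum (fun i => ⟪b i, x⟫_ℂ • A (b i)) (A x) := by
    simpa only [map_smul, b.repr_apply_apply] using (b.hasSum_repr x).mapL A
  calc ‖A x‖ ≤ ∑' i, ‖⟪b i, x⟫_ℂ‖ * ‖A (b i)‖ := by
        simp_rw [← norm_smul]
        exact hAx.tsum_eq ▸ norm_tsum_le_tsum_norm (by simpa only [norm_smul] using hCS.1)
    _ ≤ √(‖x‖ ^ 2) * hsNormAlong b A := hx.tsum_eq ▸ hCS.2
    _ = hsNormAlong b A * ‖x‖ := by rw [Real.sqrt_sq (norm_nonneg x), mul_comm]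

theorem norm_traceAlong_pow_le {A : H →L[ℂ] H} (hA : IsHSAlong b A) {k : ℕ} (hk : 2 ≤ k) :
    ‖traceAlong b (A ^ k)‖ ≤ hsNormAlong b A ^ k := by
  obtain ⟨m, rfl⟩ : ∃ m, k = m + 2 := ⟨k - 2, by omega⟩
  set S := hsNormAlong b A
  have hS : 0 ≤ S := hsNormAlong_nonneg b A
  have hterm : ∀ i,
      ‖⟪b i, (A ^ (m + 2)) (b i)⟫_ℂ‖ ≤ ‖A‖ ^ m * (‖adjoint A (b i)‖ * ‖A (b i)‖) := by
    intro i
    have h : ⟪b i, (A ^ (m + 2)) (b i)⟫_ℂ = ⟪adjoint A (b i), (A ^ m) (A (b i))⟫_ℂ := by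
      rw [adjoint_inner_left, pow_succ, pow_succ', mul_apply_eq_comp, mul_apply_eq_comp]
    calc ‖⟪b i, (A ^ (m + 2)) (b i)⟫_ℂ‖ ≤ ‖adjoint A (b i)‖ * (‖A ^ m‖ * ‖A (b i)‖) :=
          h ▸ (norm_inner_le_norm _ _).trans (by gcongr; exact le_opNorm _ _)
      _ ≤ ‖adjoint A (b i)‖ * (‖A‖ ^ m * ‖A (b i)‖) := by
          gcongr; exact norm_pow_le_pow_norm A m
      _ = _ := by ring
  have hCS := summable_and_tsum_mul_le_sqrt_mul_sqrt (fun i => norm_nonneg (adjoint A (b i)))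
    (fun i => norm_nonneg (A (b i))) (hA.adjoint b) hA
  have hmaj := hCS.1.mul_left (‖A‖ ^ m)
  have hdiag := hmaj.of_nonneg_of_le (fun _ => norm_nonneg _) hterm
  calc ‖traceAlong b (A ^ (m + 2))‖ ≤ ∑' i, ‖A‖ ^ m * (‖adjoint A (b i)‖ * ‖A (b i)‖) :=
        (norm_tsum_le_tsum_norm hdiag).trans (hdiag.tsum_le_tsum hterm hmaj)
    _ ≤ S ^ m * (S * S) := by
        rw [tsum_mul_left]
        gcongr
        · exact opNorm_le_hsNormAlong b hA
        · exact hCS.2.trans (mul_le_mul_of_nonneg_right (hsNormAlong_adjoint_le b hA) hS)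
    _ = S ^ (m + 2) := by ring

section TraceNorm

variable {a B : H →L[ℂ] H} {ε : ℝ}

theorem cfc_regSqrt_mul_self (ha : 0 ≤ a) (hε : 0 ≤ ε) :
    cfc (regSqrt ε) a * cfc (regSqrt ε) a = a + algebraMap ℝ (H →L[ℂ] H) ε := by
  rw [← cfc_mul _ _ a (continuous_regSqrt ε).continuousOn (continuous_regSqrt ε).continuousOn,
    cfc_congr fun t ht => regSqrt_mul_self hε (spectrum_nonneg_of_nonneg ha ht),
    cfc_add a _ _, cfc_id' ℝ a, cfc_const ε a]

theorem cfc_inv_regSqrt_mul_cfc_regSqrt (ha : 0 ≤ a) (hε : 0 < ε) :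
    cfc (fun t => (regSqrt ε t)⁻¹) a * cfc (regSqrt ε) a = 1 := by
  rw [← cfc_mul _ _ a (continuous_inv_regSqrt hε).continuousOn
      (continuous_regSqrt ε).continuousOn,
    cfc_congr fun t _ => inv_mul_cancel₀ (regSqrt_pos hε t).ne', cfc_const_one ℝ a]

theorem norm_cfc_regSqrt_apply_sq (ha : 0 ≤ a) (hε : 0 ≤ ε) (x : H) :
    ‖cfc (regSqrt ε) a x‖ ^ 2 = (⟪x, a x⟫_ℂ).re + ε * ‖x‖ ^ 2 := by
  have hq : IsSelfAdjoint (cfc (regSqrt ε) a) := cfc_predicate _ a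
  rw [apply_norm_sq_eq_inner_adjoint_right, hq.adjoint_eq, ← mul_def,
    cfc_regSqrt_mul_self ha hε, add_apply, inner_add_right, map_add,
    Algebra.algebraMap_eq_smul_one, smul_apply, one_apply_eq_self,
    RCLike.real_smul_eq_coe_smul (K := ℂ), inner_smul_right,
    inner_self_eq_norm_sq_to_K]
  norm_cast

theorem adjoint_mul_self_le_of_mul_self_eq (ha : 0 ≤ a) (haB : a * a = adjoint B * B)
    (hε : 0 < ε) :
    adjoint (B * cfc (fun t => (regSqrt ε t)⁻¹) a) * (B * cfc (fun t => (regSqrt ε t)⁻¹) a)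
      ≤ a := by
  set u := cfc (fun t => (regSqrt ε t)⁻¹) a
  have hu : IsSelfAdjoint u := cfc_predicate _ a
  have hcu := (continuous_inv_regSqrt hε).continuousOn (s := spectrum ℝ a)
  have hX : adjoint (B * u) * (B * u) =
      cfc (fun t => (regSqrt ε t)⁻¹ * t * t * (regSqrt ε t)⁻¹) a := by
    rw [cfc_mul _ _ a (by fun_prop) hcu, cfc_mul _ _ a (by fun_prop) (by fun_prop),
      cfc_mul _ _ a hcu (by fun_prop), cfc_id' ℝ a, ← star_eq_adjoint, star_mul,
      hu.star_eq, star_eq_adjoint, mul_assoc, ← mul_assoc (adjoint B), ← haB]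
    noncomm_ring
  rw [hX]
  conv_rhs => rw [← cfc_id' ℝ a]
  refine cfc_mono (fun t ht => ?_) (by fun_prop) (by fun_prop)
  have ht : 0 ≤ t := spectrum_nonneg_of_nonneg ha ht
  have hr := regSqrt_pos hε t
  have hrr := regSqrt_mul_self hε.le ht
  calc (regSqrt ε t)⁻¹ * t * t * (regSqrt ε t)⁻¹ = t * t / (t + ε) := by
        rw [← hrr]; field_simp
    _ ≤ t := by rw [div_le_iff₀ (by positivity)]; nlinarith

theorem sq_sum_norm_inner_apply_le (ha : 0 ≤ a) (haB : a * a = adjoint B * B)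
    (hsum : Summable fun i => (⟪b i, a (b i)⟫_ℂ).re) (hε : 0 < ε) (s : Finset ι) :
    (∑ i ∈ s, ‖⟪b i, B (b i)⟫_ℂ‖) ^ 2 ≤
      (∑' i, (⟪b i, a (b i)⟫_ℂ).re) * (∑' i, (⟪b i, a (b i)⟫_ℂ).re + ε * s.card) := by
  set T := ∑' i, (⟪b i, a (b i)⟫_ℂ).re
  set q := cfc (regSqrt ε) a
  set X := B * cfc (fun t => (regSqrt ε t)⁻¹) a
  have hdiag : ∀ i, 0 ≤ (⟪b i, a (b i)⟫_ℂ).re := fun i =>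
    ((nonneg_iff_isPositive a).1 ha).re_inner_nonneg_right (b i)
  have hXa : ∀ x, ‖X x‖ ^ 2 ≤ (⟪x, a x⟫_ℂ).re := fun x => by
    rw [apply_norm_sq_eq_inner_adjoint_right]
    exact re_inner_apply_le_of_le (adjoint_mul_self_le_of_mul_self_eq ha haB hε) x
  have hXhs : IsHSAlong b X :=
    hsum.of_nonneg_of_le (fun _ => sq_nonneg _) fun j => hXa (b j)
  have hterm : ∀ i, ‖⟪b i, B (b i)⟫_ℂ‖ ≤ ‖adjoint X (b i)‖ * ‖q (b i)‖ := fun i => by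
    have hB : B = X * q := by
      rw [mul_assoc, cfc_inv_regSqrt_mul_cfc_regSqrt ha hε, mul_one]
    rw [hB, mul_apply_eq_comp, ← adjoint_inner_left]
    exact norm_inner_le_norm _ _
  have hq : ∀ i, ‖q (b i)‖ ^ 2 = (⟪b i, a (b i)⟫_ℂ).re + ε := fun i => by
    rw [norm_cfc_regSqrt_apply_sq ha hε.le, b.orthonormal.1 i, one_pow, mul_one]
  calc (∑ i ∈ s, ‖⟪b i, B (b i)⟫_ℂ‖) ^ 2
      ≤ (∑ i ∈ s, ‖adjoint X (b i)‖ * ‖q (b i)‖) ^ 2 := by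
        gcongr with i
        exact hterm i
    _ ≤ (∑ i ∈ s, ‖adjoint X (b i)‖ ^ 2) * ∑ i ∈ s, ‖q (b i)‖ ^ 2 :=
        Finset.sum_mul_sq_le_sq_mul_sq s _ _
    _ ≤ T * (T + ε * s.card) := by
        gcongr
        · exact tsum_nonneg hdiag
        · exact (sum_norm_adjoint_apply_sq_le b hXhs s).trans
            (hXhs.tsum_le_tsum (fun j => hXa (b j)) hsum)
        · simp only [hq, Finset.sum_add_distrib, Finset.sum_const, nsmul_eq_mul, mul_comm ε]
          gcongr
          exact hsum.sum_le_tsum s fun i _ => hdiag i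

theorem sum_norm_inner_apply_le (ha : 0 ≤ a) (haB : a * a = adjoint B * B)
    (hsum : Summable fun i => (⟪b i, a (b i)⟫_ℂ).re) (s : Finset ι) :
    ∑ i ∈ s, ‖⟪b i, B (b i)⟫_ℂ‖ ≤ ∑' i, (⟪b i, a (b i)⟫_ℂ).re := by
  set T := ∑' i, (⟪b i, a (b i)⟫_ℂ).re
  have hT : 0 ≤ T := tsum_nonneg fun i =>
    ((nonneg_iff_isPositive a).1 ha).re_inner_nonneg_right (b i)
  have hlim : Filter.Tendsto (fun ε : ℝ => T * (T + ε * s.card)) (nhdsWithin 0 (Set.Ioi 0))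
      (nhds (T ^ 2)) := by
    have : Continuous fun ε : ℝ => T * (T + ε * s.card) := by fun_prop
    simpa [sq] using (this.tendsto 0).mono_left nhdsWithin_le_nhds
  have hsq := ge_of_tendsto hlim (eventually_nhdsWithin_of_forall fun ε hε =>
    sq_sum_norm_inner_apply_le b ha haB hsum hε s)
  exact (pow_le_pow_iff_left₀ (Finset.sum_nonneg fun i _ => norm_nonneg _) hT
    two_ne_zero).1 hsq

end TraceNorm

theorem absCLM_nonneg (B : H →L[ℂ] H) : 0 ≤ absCLM B := CFC.sqrt_nonneg _

theorem absCLM_mul_self (B : H →L[ℂ] H) : absCLM B * absCLM B = adjoint B * B := by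
  rw [absCLM, CFC.sqrt_mul_sqrt_self _ (star_eq_adjoint B ▸ star_mul_self_nonneg B)]

theorem norm_traceAlong_le_traceNormAlong {B : H →L[ℂ] H} (hB : IsTraceClassAlong b B) :
    ‖traceAlong b B‖ ≤ traceNormAlong b B := by
  have hle := sum_norm_inner_apply_le b (absCLM_nonneg B) (absCLM_mul_self B) hB
  exact (norm_tsum_le_tsum_norm (summable_of_sum_le (fun _ => norm_nonneg _) hle)).trans
    ((summable_of_sum_le (fun _ => norm_nonneg _) hle).tsum_le_of_sum_le hle)

section CycleSum

variable {A : H →L[ℂ] H} {trA : ℂ} {M : ℝ}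

theorem norm_cycleSum_summand_le (htr : ‖trA‖ ≤ M)
    (hpow : ∀ k, 2 ≤ k → ‖traceAlong b (A ^ k)‖ ≤ M ^ k) {n : ℕ} (ξ : Equiv.Perm (Fin n)) :
    ‖((Equiv.Perm.sign ξ : ℤ) : ℂ) * trA ^ (n - ξ.support.card) *
        ∏ η ∈ ξ.cycleFactorsFinset, traceAlong b (A ^ η.support.card)‖ ≤ M ^ n := by
  have hM : 0 ≤ M := (norm_nonneg _).trans htr
  have hprod : ‖∏ η ∈ ξ.cycleFactorsFinset, traceAlong b (A ^ η.support.card)‖ ≤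
      M ^ ξ.support.card := by
    rw [norm_prod, ← ξ.sum_card_support_cycleFactorsFinset, ← Finset.prod_pow_eq_pow_sum]
    exact Finset.prod_le_prod (fun _ _ => norm_nonneg _) fun η hη =>
      hpow _ (Equiv.Perm.mem_cycleFactorsFinset_iff.1 hη).1.two_le_card_support
  have hsupp : ξ.support.card ≤ n := by simpa using ξ.support.card_le_univ
  calc _ = ‖trA‖ ^ (n - ξ.support.card) *
        ‖∏ η ∈ ξ.cycleFactorsFinset, traceAlong b (A ^ η.support.card)‖ := by
        rcases Int.units_eq_one_or (Equiv.Perm.sign ξ) with h | h <;> simp [h]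
    _ ≤ M ^ (n - ξ.support.card) * M ^ ξ.support.card := by gcongr
    _ = M ^ n := by rw [← pow_add, Nat.sub_add_cancel hsupp]

theorem norm_cycleSum_le (htr : ‖trA‖ ≤ M)
    (hpow : ∀ k, 2 ≤ k → ‖traceAlong b (A ^ k)‖ ≤ M ^ k) (n : ℕ) :
    ‖cycleSum b trA A n‖ ≤ M ^ n := by
  rw [cycleSum, norm_mul, norm_inv, Complex.norm_natCast,
    inv_mul_le_iff₀ (by positivity)]
  calc _ ≤ ∑ _ξ : Equiv.Perm (Fin n), M ^ n :=
        (norm_sum_le _ _).trans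
          (Finset.sum_le_sum fun ξ _ => norm_cycleSum_summand_le b htr hpow ξ)
    _ = n.factorial * M ^ n := by simp [Fintype.card_perm]

end CycleSum

theorem stmt_11_general {H : Type}
    [NormedAddCommGroup H] [InnerProductSpace ℂ H] [CompleteSpace H]
    (b : HilbertBasis ℕ ℂ H) (P₁ P₂ : H →L[ℂ] H)
    (A : H →L[ℂ] H)
    (heven : IsTraceClassAlong b (P₁ * A * P₁ + P₂ * A * P₂))
    (hhs : IsHSAlong b A)
    (hnorm :
      max (hsNormAlong b A) (traceNormAlong b (P₁ * A * P₁ + P₂ * A * P₂)) < 1) :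
    (∀ n : ℕ,
        ‖(cycleSum b (traceAlong b (P₁ * A * P₁ + P₂ * A * P₂)) A (n + 1))‖ ≤
          max (hsNormAlong b A) (traceNormAlong b (P₁ * A * P₁ + P₂ * A * P₂))
            ^ (n + 1)) ∧
      Summable (fun n : ℕ =>
        ‖(cycleSum b (traceAlong b (P₁ * A * P₁ + P₂ * A * P₂)) A (n + 1))‖) := by
  set M := max (hsNormAlong b A) (traceNormAlong b (P₁ * A * P₁ + P₂ * A * P₂))
  have hM : 0 ≤ M := (hsNormAlong_nonneg b A).trans (le_max_left _ _)
  have hbound : ∀ n, ‖cycleSum b (traceAlong b (P₁ * A * P₁ + P₂ * A * P₂)) A n‖ ≤ M ^ n :=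
    norm_cycleSum_le b ((norm_traceAlong_le_traceNormAlong b heven).trans (le_max_right _ _))
      fun k hk => (norm_traceAlong_pow_le b hhs hk).trans
        (pow_le_pow_left₀ (hsNormAlong_nonneg b A) (le_max_left _ _) k)
  refine ⟨fun n => hbound (n + 1), ?_⟩
  have hgeom : Summable fun n : ℕ => M ^ (n + 1) := by
    simpa only [pow_succ] using (summable_geometric_of_lt_one hM hnorm).mul_right M
  exact hgeom.of_nonneg_of_le (fun _ => norm_nonneg _) fun n => hbound (n + 1)

/-- Let `A ∈ L_{1|2}(H)` with `‖A‖_{1|2} := max(‖A‖₂, ‖A_even‖₁) < 1`.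
Then `|Cₙ(A)| ≤ ‖A‖_{1|2}ⁿ` for every `n ≥ 1`, and the series `1 + Σ_{n≥1} Cₙ(A)`
converges absolutely; here `Cₙ(A)` is the cycle sum with the convention
`tr(A) := Tr(A_even)`. -/
theorem stmt_11 {H : Type}
    [NormedAddCommGroup H] [InnerProductSpace ℂ H] [CompleteSpace H]
    (b : HilbertBasis ℕ ℂ H) (P₁ P₂ : H →L[ℂ] H)
    (hP₁ : IsIdempotentElem P₁) (hP₁sa : IsSelfAdjoint P₁)
    (hP₂ : IsIdempotentElem P₂) (hP₂sa : IsSelfAdjoint P₂)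
    (hsum : P₁ + P₂ = 1)
    (A : H →L[ℂ] H)
    (heven : IsTraceClassAlong b (P₁ * A * P₁ + P₂ * A * P₂))
    (hhs : IsHSAlong b A)
    (hnorm :
      max (hsNormAlong b A) (traceNormAlong b (P₁ * A * P₁ + P₂ * A * P₂)) < 1) :
    (∀ n : ℕ,
        ‖(cycleSum b (traceAlong b (P₁ * A * P₁ + P₂ * A * P₂)) A (n + 1))‖ ≤
          max (hsNormAlong b A) (traceNormAlong b (P₁ * A * P₁ + P₂ * A * P₂))
            ^ (n + 1)) ∧
      Summable (fun n : ℕ =>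
        ‖(cycleSum b (traceAlong b (P₁ * A * P₁ + P₂ * A * P₂)) A (n + 1))‖) :=
  stmt_11_general b P₁ P₂ A heven hhs hnorm
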